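/- arXiv:2408.03432 — 2 statements merged into one kernel-verified Lean document; each statement's English description precedes it below -/
import Mathlib

section
/- Let L be a modular lattice with a least element 0 and a unary operation ' satisfying the identity x ∧ x' = 0. Then L satisfies identity (B2), and hence the Sasaki operations ⊙ and → on L satisfy condition (A2): for all x,y,z, x ≤ y → z implies x ⊙ y ≤ z. -/
/-!
In a modular lattice, `x ⊓ y ≤ x` lets `x ⊓ y` be pulled out of `(x' ⊔ x ⊓ y) ⊓ x`, leaving
`x ⊓ y ⊔ x' ⊓ x = x ⊓ y`; this is (B2). Given (B2), `x ≤ y → z` yields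
`x ⊙ y ≤ (y → z) ⊙ y = (y' ⊔ y ⊓ z) ⊓ y = y ⊓ z ≤ z`, which is (A2).
-/

theorem sup_inf_inf_eq_of_disjoint {L : Type*} [Lattice L] [OrderBot L] [IsModularLattice L]
    {a b : L} (hab : Disjoint a b) (y : L) : (b ⊔ a ⊓ y) ⊓ a = a ⊓ y := by
  rw [sup_comm, sup_inf_assoc_of_le b inf_le_left, inf_comm b, hab.eq_bot, sup_bot_eq]

namespace Sasaki

variable {L : Type*} [Lattice L]

-- `prod c x y` is the paper's `x ⊙ y` and `imp c x y` its `x → y`, with `c` for `'`.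
def prod (c : L → L) (x y : L) : L := (x ⊔ c y) ⊓ y

def imp (c : L → L) (x y : L) : L := c x ⊔ x ⊓ y

theorem imp_inf_self [OrderBot L] [IsModularLattice L] {c : L → L}
    (hc : ∀ x, x ⊓ c x = ⊥) (x y : L) : imp c x y ⊓ x = x ⊓ y :=
  sup_inf_inf_eq_of_disjoint (disjoint_iff.mpr (hc x)) y

theorem prod_le_of_le_imp {c : L → L} {x y z : L} (hB2 : imp c y z ⊓ y = y ⊓ z)
    (hx : x ≤ imp c y z) : prod c x y ≤ z :=
  calc prod c x y ≤ prod c (imp c y z) y := inf_le_inf_right _ (sup_le_sup_right hx _)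
    _ = imp c y z ⊓ y := by rw [prod, imp, sup_right_comm, sup_idem]
    _ = y ⊓ z := hB2
    _ ≤ z := inf_le_right

end Sasaki

/-- A modular lattice with bottom element `⊥` and a unary operation `c`
satisfying `x ⊓ c x = ⊥` satisfies identity (B2); hence the Sasaki operations
satisfy condition (A2). -/
theorem sasaki_stmt_8 {L : Type*} [Lattice L] [OrderBot L] (c : L → L)
    (modular : ∀ x y z : L, x ≤ z → x ⊔ (y ⊓ z) = (x ⊔ y) ⊓ z)
    (compl_inf : ∀ x : L, x ⊓ c x = ⊥) :
    (∀ x y : L, (c x ⊔ (x ⊓ y)) ⊓ x = x ⊓ y) ∧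
      (∀ x y z : L, x ≤ c y ⊔ (y ⊓ z) → (x ⊔ c y) ⊓ y ≤ z) := by
  have : IsModularLattice L := ⟨fun {x} y {z} h => (modular x y z h).ge⟩
  have B2 : ∀ x y : L, Sasaki.imp c x y ⊓ x = x ⊓ y := Sasaki.imp_inf_self compl_inf
  exact ⟨B2, fun x y z hx => Sasaki.prod_le_of_le_imp (B2 y z) hx⟩
end

section
/- Let A be a λ-lattice with a unary operation ' satisfying conditions (D1) and (F1), and let ⊙ and → denote the Sasaki operations on A defined by x ⊙ y := (x ⊔ y') ⊓ y and x → y := x' ⊔ (x ⊓ y). Then ⊙ and → satisfy condition (A1) with respect to the induced order: for all x,y,z, x ⊙ y ≤ z implies x ≤ y → z. -/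
/-- A λ-lattice: two commutative binary operations satisfying the weak
associativity laws and the absorption laws. -/
structure LambdaLattice (A : Type*) where
  sup : A → A → A
  inf : A → A → A
  sup_comm : ∀ x y, sup x y = sup y x
  inf_comm : ∀ x y, inf x y = inf y x
  sup_assoc : ∀ x y z, sup x (sup (sup x y) z) = sup (sup x y) z
  inf_assoc : ∀ x y z, inf x (inf (inf x y) z) = inf (inf x y) z
  absorb_sup : ∀ x y, sup x (inf x y) = x
  absorb_inf : ∀ x y, inf x (sup x y) = x

/-- The induced order of a λ-lattice: `x ≤ y` iff `x ⊔ y = y`. -/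
def LambdaLattice.le {A : Type*} (L : LambdaLattice A) (x y : A) : Prop :=
  L.sup x y = y

namespace LambdaLattice

variable {A : Type*} (L : LambdaLattice A)

theorem sup_idem (a : A) : L.sup a a = a := by
  calc L.sup a a = L.sup a (L.inf a (L.sup a a)) := by rw [L.absorb_inf]
    _ = a := L.absorb_sup a _

theorem inf_idem (a : A) : L.inf a a = a := by
  calc L.inf a a = L.inf a (L.sup a (L.inf a a)) := by rw [L.absorb_sup]
    _ = a := L.absorb_inf a _

theorem sup_left_idem (a b : A) : L.sup a (L.sup a b) = L.sup a b := by
  simpa only [L.sup_idem] using L.sup_assoc a a b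

theorem inf_left_idem (a b : A) : L.inf a (L.inf a b) = L.inf a b := by
  simpa only [L.inf_idem] using L.inf_assoc a a b

theorem le_sup_left (a b : A) : L.le a (L.sup a b) :=
  L.sup_left_idem a b

theorem le_trans {a b d : A} (hab : L.le a b) (hbd : L.le b d) : L.le a d := by
  unfold LambdaLattice.le at *
  calc L.sup a d = L.sup a (L.sup (L.sup a b) d) := by rw [hab, hbd]
    _ = d := by rw [L.sup_assoc, hab, hbd]

end LambdaLattice

/-- In a λ-lattice with a unary operation `c` satisfying conditions
(D1) and (F1), the Sasaki operations satisfy condition (A1) with respect to the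
induced order. -/
theorem sasaki_stmt_14 {A : Type*} (L : LambdaLattice A) (c : A → A)
    (D1 : ∀ x y : A, L.le (L.sup x (c y)) (L.sup (c y) (L.inf (L.sup x (c y)) y)))
    (F1 : ∀ x y z : A, L.le (L.inf (L.sup x (c y)) y) z →
      L.le (L.sup (c y) (L.inf y (L.inf (L.sup x (c y)) y))) (L.sup (c y) (L.inf y z))) :
    ∀ x y z : A, L.le (L.inf (L.sup x (c y)) y) z → L.le x (L.sup (c y) (L.inf y z)) := by
  intro x y z h
  have hmeet : L.inf y (L.inf (L.sup x (c y)) y) = L.inf (L.sup x (c y)) y := by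
    rw [L.inf_comm _ y, L.inf_left_idem]
  have hF1 := F1 x y z h
  rw [hmeet] at hF1
  -- x ≤ x ⊔ y' ≤ y' ⊔ (x ⊙ y) = y' ⊔ (y ⊓ (x ⊙ y)) ≤ y' ⊔ (y ⊓ z) = y → z
  exact L.le_trans (L.le_sup_left x (c y)) (L.le_trans (D1 x y) hF1)
end
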